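/- arXiv:1712.05244 — 5 statements merged into one kernel-verified Lean document; each statement's English description precedes it below -/
import Mathlib

section
/- Let K ≥ 1, μ ∈ (0,1), δ ∈ (0,1). Define b_m = C(K-1,m) μ^m (1-μ)^{K-1-m} for m = 0,...,K-1, and define u > -1 by Σ_{m=0}^{K-1} b_m/(1+m) = 1/(1+u). Then Σ_{m=0}^{K-1} b_m / (K(1-δ) + (1+m)δ) ≤ 1 / (K(1-δ) + (1+u)δ). -/
/-!
With `t = 1 / (1 + m)` and `c = K (1 - δ)`, the summand is `b_m f(t_m)` for
`f t = t / (c t + δ)`, which is concave on `t ≥ 0`. The binomial weights `b_m` sum to `1`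
and average `t_m` to `1 / (1 + u)`, so Jensen's inequality bounds the sum by
`f (1 / (1 + u)) = 1 / (c + (1 + u) δ)`.
-/

open Finset Set

theorem concaveOn_div_mul_add {c d : ℝ} (hc : 0 ≤ c) (hd : 0 < d) :
    ConcaveOn ℝ (Ici 0) fun t => t / (c * t + d) := by
  refine ⟨convex_Ici 0, fun x (hx : 0 ≤ x) y (hy : 0 ≤ y) a b ha hb hab => ?_⟩
  have hx' : 0 < c * x + d := by positivity
  have hy' : 0 < c * y + d := by positivity
  have hxy : 0 < c * (a * x + b * y) + d := by positivity
  simp only [smul_eq_mul]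
  rw [mul_div_assoc', mul_div_assoc', div_add_div _ _ hx'.ne' hy'.ne',
    div_le_div_iff₀ (by positivity) hxy]
  obtain rfl : b = 1 - a := by linarith
  -- the gap is `a (1 - a) c d (x - y)² / ((c x + d) (c y + d) (c (a x + b y) + d))`
  nlinarith [mul_nonneg (mul_nonneg (mul_nonneg ha hb) (mul_nonneg hc hd.le)) (sq_nonneg (x - y))]

theorem one_div_div_mul_one_div_add {c d s : ℝ} (hs : s ≠ 0) :
    1 / s / (c * (1 / s) + d) = 1 / (c + s * d) := by
  field_simp

theorem sum_range_choose_mul_pow_mul_one_sub_pow (n : ℕ) (x : ℝ) :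
    ∑ m ∈ range (n + 1), (n.choose m : ℝ) * x ^ m * (1 - x) ^ (n - m) = 1 := by
  simpa [mul_comm, mul_left_comm, mul_assoc] using (add_pow x (1 - x) n).symm

theorem stmt_5 (K : ℕ) (hK : 1 ≤ K) (μ δ : ℝ) (hμ0 : 0 < μ) (hμ1 : μ < 1)
    (hδ0 : 0 < δ) (hδ1 : δ < 1) (u : ℝ) (hu : -1 < u)
    (hudef : ∑ m ∈ Finset.range K,
        ((Nat.choose (K - 1) m : ℝ) * μ ^ m * (1 - μ) ^ (K - 1 - m)) / (1 + m)
      = 1 / (1 + u)) :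
    ∑ m ∈ Finset.range K,
        ((Nat.choose (K - 1) m : ℝ) * μ ^ m * (1 - μ) ^ (K - 1 - m)) /
          ((K : ℝ) * (1 - δ) + (1 + m) * δ)
      ≤ 1 / ((K : ℝ) * (1 - δ) + (1 + u) * δ) := by
  obtain ⟨n, rfl⟩ : ∃ n, K = n + 1 := ⟨K - 1, by omega⟩
  rw [Nat.add_sub_cancel] at hudef ⊢
  set b : ℕ → ℝ := fun m => (n.choose m : ℝ) * μ ^ m * (1 - μ) ^ (n - m)
  set c : ℝ := ((n + 1 : ℕ) : ℝ) * (1 - δ)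
  have hb : ∀ m ∈ range (n + 1), 0 ≤ b m := fun m _ => by
    have : 0 < 1 - μ := by linarith
    positivity
  have hb_sum : ∑ m ∈ range (n + 1), b m = 1 := sum_range_choose_mul_pow_mul_one_sub_pow n μ
  have hb_mean : ∑ m ∈ range (n + 1), b m • (1 / (1 + m : ℝ)) = 1 / (1 + u) := by
    simpa only [smul_eq_mul, mul_one_div] using hudef
  have jensen := (concaveOn_div_mul_add (c := c)
    (mul_nonneg (Nat.cast_nonneg _) (sub_nonneg.mpr hδ1.le)) hδ0).le_map_sum hb hb_sum
    (p := fun m : ℕ => 1 / (1 + m : ℝ)) fun m _ => mem_Ici.mpr (by positivity)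
  rw [hb_mean, one_div_div_mul_one_div_add (by linarith)] at jensen
  have hterm (m : ℕ) :
      b m • (1 / (1 + m : ℝ) / (c * (1 / (1 + m)) + δ)) = b m / (c + (1 + m) * δ) := by
    rw [one_div_div_mul_one_div_add (by positivity), smul_eq_mul, mul_one_div]
  simpa only [hterm] using jensen
end

section
/- Let K ≥ 1, N ≥ K be integers, M ∈ [0,N] with μ = M/N, δ ∈ [0,1], and s ∈ {1,...,K}. If Kμ is an integer, K ≥ s(1+Kμ), and T_C(μ,1) ≤ 12·T_s^{lb}(μ,1), then T_C(μ,δ) ≤ 12·T_s^{lb}(μ,δ) for all δ ∈ [0,1], where T_C(μ,δ) = K(1-μ)/(K(1-δ)+(1+Kμ)δ) and T_s^{lb}(μ,δ) = max(0, (s/(1+(s-1)(1-δ)))·(1 - M/⌊N/s⌋)). -/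
/-!
Write `a = 1 + Kμ`, `D(δ) = K(1-δ) + aδ` and `E(δ) = 1 + (s-1)(1-δ)`, so that
`T_C(μ,δ) = K(1-μ)/D(δ)` and `T_s^{lb}(μ,δ) = max 0 (s(1 - M/⌊N/s⌋)) / E(δ)`.
Since `s·a ≤ K`, both sides of `a·E(δ) ≤ D(δ)` are affine in `1-δ` with the same value at
`δ = 1`, hence `T_C(μ,δ) ≤ T_C(μ,1)/E(δ) ≤ 12·T_s^{lb}(μ,1)/E(δ) = 12·T_s^{lb}(μ,δ)`.
-/

lemma mul_one_add_sub_one_mul_le {a s K δ : ℝ} (hsa : s * a ≤ K) (hδ : δ ≤ 1) :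
    a * (1 + (s - 1) * (1 - δ)) ≤ K * (1 - δ) + a * δ := by
  nlinarith [mul_le_mul_of_nonneg_right hsa (sub_nonneg.2 hδ)]

lemma div_le_of_div_le_of_le {x p q c : ℝ} (hc : 0 ≤ c) (hp : 0 < p) (hpq : p ≤ q)
    (h : x / p ≤ c) : x / q ≤ c := by
  rcases le_or_gt 0 x with hx | hx
  · exact (div_le_div_of_nonneg_left hx hp hpq).trans h
  · exact (div_neg_of_neg_of_pos hx (hp.trans_le hpq)).le.trans hc

lemma max_zero_div {y e : ℝ} (he : 0 ≤ e) : max 0 y / e = max 0 (y / e) := by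
  rw [← max_div_div_right he, zero_div]

theorem stmt_10_general (K N M s : ℕ) (hs1 : 1 ≤ s)
    (μ : ℝ) (hμ : μ = (M : ℝ) / N)
    (hKs : (s : ℝ) * (1 + (K : ℝ) * μ) ≤ K)
    (h1 : (K : ℝ) * (1 - μ) / ((K : ℝ) * (1 - 1) + (1 + (K : ℝ) * μ) * 1)
      ≤ 12 * max 0 (((s : ℝ) / (1 + ((s : ℝ) - 1) * (1 - 1))) * (1 - (M : ℝ) / (N / s : ℕ)))) :
    ∀ δ : ℝ, 0 ≤ δ → δ ≤ 1 →
      (K : ℝ) * (1 - μ) / ((K : ℝ) * (1 - δ) + (1 + (K : ℝ) * μ) * δ)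
        ≤ 12 * max 0 (((s : ℝ) / (1 + ((s : ℝ) - 1) * (1 - δ))) * (1 - (M : ℝ) / (N / s : ℕ))) := by
  intro δ _ hδ1
  set a : ℝ := 1 + K * μ
  set E : ℝ := 1 + ((s : ℝ) - 1) * (1 - δ)
  set A : ℝ := 1 - (M : ℝ) / (N / s : ℕ)
  have ha : 0 < a := by
    have : 0 ≤ μ := hμ ▸ by positivity
    positivity
  have hE : 0 < E := by
    have : (1 : ℝ) ≤ s := by exact_mod_cast hs1
    nlinarith
  have h1' : K * (1 - μ) / a ≤ 12 * max 0 (s * A) := by simpa using h1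
  refine div_le_of_div_le_of_le (by positivity) (mul_pos ha hE)
    (by simpa [mul_comm] using mul_one_add_sub_one_mul_le hKs hδ1) ?_
  calc K * (1 - μ) / (a * E) = K * (1 - μ) / a / E := by rw [div_div]
    _ ≤ 12 * max 0 (s * A) / E := by gcongr
    _ = 12 * max 0 (s / E * A) := by rw [mul_div_assoc, max_zero_div hE.le, div_mul_eq_mul_div]

theorem stmt_10 (K N M s : ℕ) (hK : 1 ≤ K) (hs1 : 1 ≤ s) (hsK : s ≤ K)
    (hNK : K ≤ N) (hMN : M ≤ N) (μ : ℝ) (hμ : μ = (M : ℝ) / N)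
    (hint : ∃ m : ℕ, (K : ℝ) * μ = m)
    (hKs : (s : ℝ) * (1 + (K : ℝ) * μ) ≤ K)
    (hM : M < N / s)
    (h1 : (K : ℝ) * (1 - μ) / ((K : ℝ) * (1 - 1) + (1 + (K : ℝ) * μ) * 1)
      ≤ 12 * max 0 (((s : ℝ) / (1 + ((s : ℝ) - 1) * (1 - 1))) * (1 - (M : ℝ) / (N / s : ℕ)))) :
    ∀ δ : ℝ, 0 ≤ δ → δ ≤ 1 →
      (K : ℝ) * (1 - μ) / ((K : ℝ) * (1 - δ) + (1 + (K : ℝ) * μ) * δ)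
        ≤ 12 * max 0 (((s : ℝ) / (1 + ((s : ℝ) - 1) * (1 - δ))) * (1 - (M : ℝ) / (N / s : ℕ))) :=
  stmt_10_general K N M s hs1 μ hμ hKs h1
end

section
/- For every integer K ≥ 1, real μ ∈ (0,1), and real δ ∈ [0,1], the decentralized delivery time T_D(μ,δ) = K·Σ_{m=0}^{K-1} [C(K-1,m) μ^m (1-μ)^{K-m}] / [K(1-δ) + (1+m)δ] satisfies T_D(μ,δ) ≤ K(1-μ)/(K(1-δ) + (1+u)δ), where u ≥ 0 is defined by 1+u = Kμ/(1-(1-μ)^K). -/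
/-!
Put `a = K(1-δ)`, `b = δ` and `t = 1/(1+m)`. The `m`-th summand is `w_m · f(t)` with
`f(t) = t/(a t + b)`, which is concave for `a, b ≥ 0`. The binomial weights `w_m` have total mass
`1-μ`, and the binomial identity `(m+1) C(K,m+1) = K C(K-1,m)` shows that their weighted mean
of `1/(1+m)` is exactly `1/(1+u)`. Jensen's inequality, in the form of the tangent line of `f`
at `1/(1+u)`, then bounds the sum by `(1-μ) f(1/(1+u))`.
-/

open Finset

-- The tangent line of `t ↦ t / (a * t + b)` at `t = 1 / y`, evaluated at `t = 1 / x`.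
theorem one_div_add_mul_le_tangent {a b x y : ℝ} (ha : 0 ≤ a) (hb : 0 ≤ b) (hx : 0 < x)
    (hy : 0 < y) (hax : 0 < a + x * b) (hay : 0 < a + y * b) :
    1 / (a + x * b) ≤ 1 / (a + y * b) + y ^ 2 * b / (a + y * b) ^ 2 * (1 / x - 1 / y) := by
  have key : 1 / (a + y * b) + y ^ 2 * b / (a + y * b) ^ 2 * (1 / x - 1 / y) - 1 / (a + x * b)
      = a * b * (x - y) ^ 2 / (x * (a + y * b) ^ 2 * (a + x * b)) := by
    have hax' : a + b * x ≠ 0 := by rw [mul_comm]; exact hax.ne'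
    field_simp
    ring
  rw [← sub_nonneg, key]
  positivity

theorem sum_div_add_mul_le_of_sum_div_eq {ι : Type*} (s : Finset ι) (w x : ι → ℝ)
    {a b y : ℝ} (ha : 0 ≤ a) (hb : 0 ≤ b) (hy : 0 < y) (hay : 0 < a + y * b)
    (hw : ∀ i ∈ s, 0 ≤ w i) (hx : ∀ i ∈ s, 0 < x i)
    (hmean : ∑ i ∈ s, w i / x i = (∑ i ∈ s, w i) / y) :
    ∑ i ∈ s, w i / (a + x i * b) ≤ (∑ i ∈ s, w i) / (a + y * b) := by
  set c := y ^ 2 * b / (a + y * b) ^ 2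
  have hax : ∀ i ∈ s, 0 < a + x i * b := fun i hi => by
    rcases hb.eq_or_lt with rfl | hb
    · simpa using hay
    · have := hx i hi
      positivity
  calc ∑ i ∈ s, w i / (a + x i * b)
      ≤ ∑ i ∈ s, w i * (1 / (a + y * b) + c * (1 / x i - 1 / y)) :=
        sum_le_sum fun i hi => by
          rw [div_eq_mul_one_div]
          exact mul_le_mul_of_nonneg_left
            (one_div_add_mul_le_tangent ha hb (hx i hi) hy (hax i hi) hay) (hw i hi)
    _ = (∑ i ∈ s, w i) / (a + y * b) + c * (∑ i ∈ s, w i / x i - (∑ i ∈ s, w i) / y) := by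
        rw [sum_div, sum_div, mul_sub, mul_sum, mul_sum, ← sum_sub_distrib, ← sum_add_distrib]
        exact sum_congr rfl fun i _ => by ring
    _ = (∑ i ∈ s, w i) / (a + y * b) := by rw [hmean, sub_self, mul_zero, add_zero]

theorem sum_range_choose_pred_mul_pow {R : Type*} [CommSemiring R] (p q : R) {K : ℕ}
    (hK : 1 ≤ K) :
    ∑ m ∈ range K, (K - 1).choose m * p ^ m * q ^ (K - m) = q * (p + q) ^ (K - 1) := by
  obtain ⟨n, rfl⟩ := Nat.exists_eq_add_of_le' hK
  rw [Nat.add_sub_cancel, add_pow, mul_sum]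
  refine sum_congr rfl fun m hm => ?_
  rw [Nat.sub_add_comm (mem_range_succ_iff.mp hm), pow_succ]
  ring

theorem sum_range_choose_pred_mul_pow_div_succ {𝕜 : Type*} [Field 𝕜] [CharZero 𝕜] (p q : 𝕜)
    {K : ℕ} (hK : 1 ≤ K) :
    K * p * ∑ m ∈ range K, (K - 1).choose m * p ^ m * q ^ (K - m) / (1 + m)
      = q * ((p + q) ^ K - q ^ K) := by
  obtain ⟨n, rfl⟩ := Nat.exists_eq_add_of_le' hK
  rw [Nat.add_sub_cancel, add_pow,
    sum_range_succ' (fun m => p ^ m * q ^ (n + 1 - m) * ((n + 1).choose m : 𝕜)), mul_sum]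
  simp only [pow_zero, Nat.sub_zero, Nat.choose_zero_right, Nat.cast_one, one_mul, mul_one,
    add_sub_cancel_right, mul_sum]
  refine sum_congr rfl fun m hm => ?_
  have hchoose : ((n + 1 : ℕ) : 𝕜) * n.choose m = (n + 1).choose (m + 1) * (1 + m) := by
    rw [add_comm (1 : 𝕜)]
    exact_mod_cast (Nat.add_one_mul_choose_eq n m).trans (by ring)
  rw [Nat.sub_add_comm (mem_range_succ_iff.mp hm), Nat.add_sub_add_right, pow_succ, pow_succ]
  have hm1 : (1 + m : 𝕜) ≠ 0 := by norm_cast; omega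
  field_simp
  linear_combination (p * p ^ m * q ^ (n - m) * q) * hchoose

theorem stmt_12_general (K : ℕ) (hK : 1 ≤ K) (μ δ : ℝ) (hμ0 : 0 < μ) (hμ1 : μ < 1)
    (hδ0 : 0 ≤ δ) (hδ1 : δ ≤ 1) (u : ℝ)
    (hu : 1 + u = (K : ℝ) * μ / (1 - (1 - μ) ^ K)) :
    (K : ℝ) * ∑ m ∈ Finset.range K,
        ((Nat.choose (K - 1) m : ℝ) * μ ^ m * (1 - μ) ^ (K - m)) /
          ((K : ℝ) * (1 - δ) + (1 + m) * δ)
      ≤ (K : ℝ) * (1 - μ) / ((K : ℝ) * (1 - δ) + (1 + u) * δ) := by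
  have hKμ : 0 < (K : ℝ) * μ := by positivity
  have hgain : 0 < 1 - (1 - μ) ^ K :=
    sub_pos.2 (pow_lt_one₀ (by linarith) (by linarith) (by omega))
  have hu1 : 0 < 1 + u := hu ▸ div_pos hKμ hgain
  have hden : 0 < K * (1 - δ) + (1 + u) * δ := by
    rcases hδ1.lt_or_eq with hδ | rfl
    · linarith [mul_pos (Nat.cast_pos.2 hK) (sub_pos.2 hδ), mul_nonneg hu1.le hδ0]
    · simpa using hu1
  have hmass := sum_range_choose_pred_mul_pow μ (1 - μ) hK
  rw [add_sub_cancel, one_pow, mul_one] at hmass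
  have hmean : ∑ m ∈ range K, (K - 1).choose m * μ ^ m * (1 - μ) ^ (K - m) / (1 + m)
      = (∑ m ∈ range K, (K - 1).choose m * μ ^ m * (1 - μ) ^ (K - m)) / (1 + u) := by
    rw [hmass, hu, div_div_eq_mul_div, eq_div_iff hKμ.ne', mul_comm,
      sum_range_choose_pred_mul_pow_div_succ μ (1 - μ) hK, add_sub_cancel, one_pow]
  have hjensen := sum_div_add_mul_le_of_sum_div_eq (range K) _ (fun m : ℕ => 1 + (m : ℝ))
    (a := K * (1 - δ)) (b := δ) (mul_nonneg K.cast_nonneg (by linarith)) hδ0 hu1 hden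
    (fun m _ => by have := hμ1.le; positivity) (fun m _ => by positivity) hmean
  rw [hmass] at hjensen
  rw [mul_div_assoc]
  exact mul_le_mul_of_nonneg_left hjensen (Nat.cast_nonneg K)

theorem stmt_12 (K : ℕ) (hK : 1 ≤ K) (μ δ : ℝ) (hμ0 : 0 < μ) (hμ1 : μ < 1)
    (hδ0 : 0 ≤ δ) (hδ1 : δ ≤ 1) (u : ℝ) (hu0 : 0 ≤ u)
    (hu : 1 + u = (K : ℝ) * μ / (1 - (1 - μ) ^ K)) :
    (K : ℝ) * ∑ m ∈ Finset.range K,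
        ((Nat.choose (K - 1) m : ℝ) * μ ^ m * (1 - μ) ^ (K - m)) /
          ((K : ℝ) * (1 - δ) + (1 + m) * δ)
      ≤ (K : ℝ) * (1 - μ) / ((K : ℝ) * (1 - δ) + (1 + u) * δ) :=
  stmt_12_general K hK μ δ hμ0 hμ1 hδ0 hδ1 u hu
end

section
/- For every integer K ≥ 1, real μ ∈ [0,1], and real δ ∈ [0,1], the decentralized delivery time T_D(μ,δ) = K·Σ_{m=0}^{K-1} [C(K-1,m) μ^m (1-μ)^{K-m}]/[K(1-δ)+(1+m)δ] satisfies T_D(μ,δ) ≤ T_D(μ,1) = ((1-μ)/μ)(1-(1-μ)^K) ≤ min(K(1-μ), 1/μ - 1) for μ ∈ (0,1). -/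
/-!
Since `m ≤ K - 1`, each denominator `K (1 - δ) + (1 + m) δ = K - (K - 1 - m) δ` is at least `1 + m`
and decreases in `δ`, so `T_D(μ, δ)` increases in `δ` up to `δ = 1`. At `δ = 1` the identity
`K · C(K-1, m) = (m + 1) · C(K, m+1)` absorbs the denominator `1 + m`, and the sum becomes a
binomial expansion of `(μ + (1 - μ))^K` without its `m = 0` term, giving `(1 - μ)/μ · (1 - (1 - μ)^K)`.
The final bounds are Bernoulli's inequality `(1 - μ)^K ≥ 1 - Kμ` and `(1 - μ)^K ≥ 0`.
-/

open Finset

/-- The paper's `T_D(μ, δ)`. -/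
noncomputable def decentralizedDeliveryTime (K : ℕ) (μ δ : ℝ) : ℝ :=
  (K : ℝ) * ∑ m ∈ Finset.range K,
    ((Nat.choose (K - 1) m : ℝ) * μ ^ m * (1 - μ) ^ (K - m)) /
      ((K : ℝ) * (1 - δ) + (1 + m) * δ)

lemma add_pow_sub_pow_eq_sum_range {R : Type*} [CommRing R] (x y : R) (K : ℕ) :
    (x + y) ^ K - y ^ K =
      ∑ m ∈ range K, x ^ (m + 1) * y ^ (K - (m + 1)) * (K.choose (m + 1) : R) := by
  rw [add_pow, sum_range_succ']
  simp

lemma decentralizedDeliveryTime_mono {K : ℕ} {μ δ δ' : ℝ} (hμ0 : 0 ≤ μ) (hμ1 : μ ≤ 1)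
    (hδ : δ ≤ δ') (hδ' : δ' ≤ 1) :
    decentralizedDeliveryTime K μ δ ≤ decentralizedDeliveryTime K μ δ' := by
  have hμ' : 0 ≤ 1 - μ := by linarith
  refine mul_le_mul_of_nonneg_left (sum_le_sum fun m hm => ?_) (by positivity)
  have hmK : (m : ℝ) + 1 ≤ K := by exact_mod_cast mem_range.mp hm
  apply div_le_div_of_nonneg_left (by positivity) <;> nlinarith

lemma decentralizedDeliveryTime_one (K : ℕ) {μ : ℝ} (hμ : μ ≠ 0) :
    decentralizedDeliveryTime K μ 1 = (1 - μ) / μ * (1 - (1 - μ) ^ K) := by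
  have binomial := add_pow_sub_pow_eq_sum_range μ (1 - μ) K
  rw [add_sub_cancel, one_pow] at binomial
  rw [decentralizedDeliveryTime, binomial, mul_sum, mul_sum]
  refine sum_congr rfl fun m hm => ?_
  obtain ⟨k, rfl⟩ : ∃ k, K = k + 1 := Nat.exists_eq_add_one.mpr (by grind)
  have hchoose :
      ((k + 1 : ℕ) : ℝ) * (k.choose m : ℝ) = ((k + 1).choose (m + 1) : ℝ) * (m + 1) := by
    exact_mod_cast Nat.add_one_mul_choose_eq k m
  rw [Nat.add_sub_cancel, show k + 1 - m = k + 1 - (m + 1) + 1 by grind, pow_succ]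
  field_simp
  linear_combination μ ^ (m + 1) * (1 - μ) ^ (k + 1 - (m + 1)) * (1 - μ) * hchoose

lemma div_mul_one_sub_one_sub_pow_le_mul {μ : ℝ} (K : ℕ) (hμ0 : 0 < μ) (hμ1 : μ ≤ 1) :
    (1 - μ) / μ * (1 - (1 - μ) ^ K) ≤ K * (1 - μ) := by
  have bernoulli := one_add_mul_le_pow (by linarith : (-2 : ℝ) ≤ -μ) K
  rw [← sub_eq_add_neg] at bernoulli
  rw [div_mul_eq_mul_div, div_le_iff₀ hμ0]
  nlinarith [mul_le_mul_of_nonneg_left bernoulli (by linarith : 0 ≤ 1 - μ)]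

lemma div_mul_one_sub_one_sub_pow_le {μ : ℝ} (K : ℕ) (hμ0 : 0 < μ) (hμ1 : μ ≤ 1) :
    (1 - μ) / μ * (1 - (1 - μ) ^ K) ≤ 1 / μ - 1 := by
  have hμ' : 0 ≤ 1 - μ := by linarith
  calc (1 - μ) / μ * (1 - (1 - μ) ^ K) ≤ (1 - μ) / μ * 1 := by
        gcongr; linarith [pow_nonneg hμ' K]
    _ = 1 / μ - 1 := by field_simp

theorem stmt_14_general (K : ℕ) (μ δ : ℝ) (hμ0 : 0 < μ) (hμ1 : μ < 1)
    (hδ1 : δ ≤ 1) :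
    (K : ℝ) * ∑ m ∈ Finset.range K,
        ((Nat.choose (K - 1) m : ℝ) * μ ^ m * (1 - μ) ^ (K - m)) /
          ((K : ℝ) * (1 - δ) + (1 + m) * δ)
      ≤ ((1 - μ) / μ) * (1 - (1 - μ) ^ K) ∧
    (K : ℝ) * ∑ m ∈ Finset.range K,
        ((Nat.choose (K - 1) m : ℝ) * μ ^ m * (1 - μ) ^ (K - m)) /
          ((K : ℝ) * (1 - 1) + (1 + m) * 1)
      = ((1 - μ) / μ) * (1 - (1 - μ) ^ K) ∧
    ((1 - μ) / μ) * (1 - (1 - μ) ^ K) ≤ min ((K : ℝ) * (1 - μ)) (1 / μ - 1) := by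
  have at_one := decentralizedDeliveryTime_one K hμ0.ne'
  exact ⟨(decentralizedDeliveryTime_mono hμ0.le hμ1.le hδ1 le_rfl).trans_eq at_one, at_one,
    le_min (div_mul_one_sub_one_sub_pow_le_mul K hμ0 hμ1.le)
      (div_mul_one_sub_one_sub_pow_le K hμ0 hμ1.le)⟩

theorem stmt_14 (K : ℕ) (hK : 1 ≤ K) (μ δ : ℝ) (hμ0 : 0 < μ) (hμ1 : μ < 1)
    (hδ0 : 0 ≤ δ) (hδ1 : δ ≤ 1) :
    (K : ℝ) * ∑ m ∈ Finset.range K,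
        ((Nat.choose (K - 1) m : ℝ) * μ ^ m * (1 - μ) ^ (K - m)) /
          ((K : ℝ) * (1 - δ) + (1 + m) * δ)
      ≤ ((1 - μ) / μ) * (1 - (1 - μ) ^ K) ∧
    (K : ℝ) * ∑ m ∈ Finset.range K,
        ((Nat.choose (K - 1) m : ℝ) * μ ^ m * (1 - μ) ^ (K - m)) /
          ((K : ℝ) * (1 - 1) + (1 + m) * 1)
      = ((1 - μ) / μ) * (1 - (1 - μ) ^ K) ∧
    ((1 - μ) / μ) * (1 - (1 - μ) ^ K) ≤ min ((K : ℝ) * (1 - μ)) (1 / μ - 1) :=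
  stmt_14_general K μ δ hμ0 hμ1 hδ1
end

section
/- For K ≥ 13 an integer (so that s = ⌊0.275K⌋ ≥ 3) and any integers N ≥ K, 0 ≤ M ≤ N with M/N ≤ 1.1/K, the cut-set bound at s = ⌊0.275K⌋ and δ = 1 satisfies (s)(1 - M/⌊N/s⌋) ≥ K/12. -/
/-!
Write `q = ⌊N/s⌋`. Since `s ≤ 0.275 K < K/3 ≤ N/3`, we have `q ≥ 3`, so
`N < (q + 1) s ≤ 4 q s / 3`. Hence `M/q = (M/N)(N/q) ≤ (1.1/K)(4s/3)` and the bound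
reduces to the quadratic inequality `K/12 ≤ s (1 - 4.4 s / (3K))`, which holds whenever `0.15 K ≤ s ≤ K/3`.
-/

theorem Nat.cast_div_cast_div_le_of_mul_le {N s k : ℕ} (hs : 0 < s) (hk : 0 < k)
    (hkN : k * s ≤ N) :
    (N : ℝ) / (N / s : ℕ) ≤ (k + 1) * s / k := by
  have hkq : k ≤ N / s := (Nat.le_div_iff_mul_le hs).2 hkN
  have hNq : N < (N / s + 1) * s := by
    rw [add_one_mul]; exact Nat.lt_div_mul_add hs
  have hkq' : (k : ℝ) ≤ (N / s : ℕ) := by exact_mod_cast hkq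
  have hNq' : (N : ℝ) ≤ ((N / s : ℕ) + 1) * s := by exact_mod_cast hNq.le
  have hk' : (0 : ℝ) < k := by exact_mod_cast hk
  rw [div_le_div_iff₀ (hk'.trans_le hkq') hk']
  nlinarith [mul_le_mul_of_nonneg_right hkq' (Nat.cast_nonneg (α := ℝ) s)]

theorem quadratic_cutset_bound {K s : ℝ} (hK : 0 < K) (hs_lo : 3 * K ≤ 20 * s)
    (hs_hi : 3 * s ≤ K) :
    K / 12 ≤ s * (1 - 1.1 / K * (4 * s / 3)) := by
  have h : s * (1 - 1.1 / K * (4 * s / 3)) - K / 12 =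
      (60 * s * K - 88 * s ^ 2 - 5 * K ^ 2) / (60 * K) := by
    field_simp; ring
  have : 0 ≤ (60 * s * K - 88 * s ^ 2 - 5 * K ^ 2) / (60 * K) := by
    apply div_nonneg _ (by positivity)
    nlinarith [mul_nonneg (sub_nonneg.2 hs_lo) (sub_nonneg.2 hs_hi)]
  linarith

theorem stmt_17_general (K N M s : ℕ) (hK : 13 ≤ K) (hs : s = 275 * K / 1000)
    (hNK : K ≤ N) (hμ : (M : ℝ) / N ≤ 1.1 / K) :
    (K : ℝ) / 12 ≤ (s : ℝ) * (1 - (M : ℝ) / ((N / s : ℕ) : ℝ)) := by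
  have hs_lo : 3 * K ≤ 20 * s := by omega
  have hs_hi : 3 * s ≤ K := by omega
  have hN : (N : ℝ) ≠ 0 := by norm_cast; omega
  have hload : (M : ℝ) / (N / s : ℕ) ≤ 1.1 / K * (4 * s / 3) := by
    calc (M : ℝ) / (N / s : ℕ) = M / N * (N / (N / s : ℕ)) := (div_mul_div_cancel₀ hN).symm
      _ ≤ 1.1 / K * (4 * s / 3) := by
        have hq := Nat.cast_div_cast_div_le_of_mul_le (k := 3) (by omega : 0 < s) (by norm_num)
          (by omega : 3 * s ≤ N)
        exact mul_le_mul hμ (hq.trans_eq (by norm_num)) (by positivity) (by positivity)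
  calc (K : ℝ) / 12 ≤ s * (1 - 1.1 / K * (4 * s / 3)) :=
        quadratic_cutset_bound (by positivity) (by exact_mod_cast hs_lo) (by exact_mod_cast hs_hi)
    _ ≤ s * (1 - (M : ℝ) / (N / s : ℕ)) := by gcongr

theorem stmt_17 (K N M s : ℕ) (hK : 13 ≤ K) (hs : s = 275 * K / 1000)
    (hNK : K ≤ N) (hMN : M ≤ N) (hμ : (M : ℝ) / N ≤ 1.1 / K) :
    (K : ℝ) / 12 ≤ (s : ℝ) * (1 - (M : ℝ) / ((N / s : ℕ) : ℝ)) :=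
  stmt_17_general K N M s hK hs hNK hμ
end
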